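/- Let W : ℝ² → ℝ² be continuously differentiable with compact support, let Δ ⊂ ℝ² be a bounded measurable set, let ν ∈ ℝ, and let v, φ : ℝ × ℝ² → ℝ² be twice continuously differentiable. Write v = v(0, ·), φ = φ(0, ·), v̇(x) = d/dt|_{t=0} v(t, F_t(x)), φ̇(x) = d/dt|_{t=0} φ(t, F_t(x)), and ∇ for the spatial Jacobian. Then the map t ↦ ∫_{F_t(Δ)} ν ∇v(t,·)(y) : ∇φ(t,·)(y) dy is differentiable at t = 0 and its derivative equals ∫_Δ [ ν ∇v̇(x) : ∇φ(x) − ν (∇v(x) ∇W(x)) : ∇φ(x) + ν ∇v(x) : ∇φ̇(x) − ν ∇v(x) : (∇φ(x) ∇W(x)) + div W(x) · ν ∇v(x) : ∇φ(x) ] dx. -/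

import Mathlib

open MeasureTheory

/-- Jacobian matrix of a vector field on `ℝ²`: `(jac v x) i j = ∂ v_i / ∂ x_j`. -/
noncomputable def jac (v : EuclideanSpace ℝ (Fin 2) → EuclideanSpace ℝ (Fin 2))
    (x : EuclideanSpace ℝ (Fin 2)) : Matrix (Fin 2) (Fin 2) ℝ :=
  Matrix.of fun i j => fderiv ℝ v x (EuclideanSpace.single j (1 : ℝ)) i

noncomputable def divg (v : EuclideanSpace ℝ (Fin 2) → EuclideanSpace ℝ (Fin 2))
    (x : EuclideanSpace ℝ (Fin 2)) : ℝ :=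
  Matrix.trace (jac v x)

/-- Frobenius inner product of matrices: `A : B = ∑_{j,k} A_{jk} B_{jk}`. -/
def frob (A B : Matrix (Fin 2) (Fin 2) ℝ) : ℝ :=
  ∑ j, ∑ k, A j k * B j k

/-!
For small `|t|` the map `F_t x = x + t W x` is injective on the bounded set `Δ` (as `W` is
Lipschitz there) and its Jacobian determinant `det (I + t ∇W) = 1 + t div W + t² det ∇W` is
positive, so the change of variables `y = F_t x` turns the integral over `F_t(Δ)` into
`∫_Δ det (I + t ∇W(x)) ν ∇v(t, F_t x) : ∇φ(t, F_t x) dx`. This integrand and its `t`-derivative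
are jointly continuous in `(t, x)`, so it can be differentiated under the integral sign. Its derivative at
`t = 0` is the claimed one because, by symmetry of second derivatives, the gradient of the
material derivative is `∇u̇ = d/dt|₀ ∇u(t, F_t x) + ∇u ∇W`.
-/

open Filter Topology Set Function

section General

variable {E : Type*} [NormedAddCommGroup E] [NormedSpace ℝ E]

theorem hasDerivAt_prod_add_smul (x w : E) (t : ℝ) :
    HasDerivAt (fun s : ℝ => (s, x + s • w)) (1, w) t :=
  (hasDerivAt_id t).prodMk (by simpa using ((hasDerivAt_id t).smul_const w).const_add x)

theorem injOn_add_smul_of_lipschitzOnWith {W : E → E} {s : Set E} {M : NNReal}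
    (hW : LipschitzOnWith M W s) {t : ℝ} (ht : |t| * M < 1) :
    InjOn (fun x => x + t • W x) s := by
  intro x hx y hy hxy
  have hdiff : x - y = t • (W y - W x) := by
    rw [smul_sub, sub_eq_sub_iff_add_eq_add]
    simpa [add_comm] using hxy
  have hle : ‖x - y‖ ≤ |t| * M * ‖x - y‖ := by
    calc ‖x - y‖ = |t| * ‖W y - W x‖ := by rw [hdiff, norm_smul, Real.norm_eq_abs]
      _ ≤ |t| * (M * ‖y - x‖) := by gcongr; exact hW.norm_sub_le hy hx
      _ = |t| * M * ‖x - y‖ := by rw [norm_sub_rev]; ring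
  have : ‖x - y‖ = 0 := by nlinarith [norm_nonneg (x - y)]
  exact sub_eq_zero.1 (norm_eq_zero.1 this)

theorem eventually_setIntegral_image_add_smul [FiniteDimensional ℝ E] [MeasurableSpace E]
    [BorelSpace E] {F : Type*} [NormedAddCommGroup F] [NormedSpace ℝ F]
    (μ : Measure E) [μ.IsAddHaarMeasure] {W : E → E} (hW : ContDiff ℝ 1 W) {s : Set E}
    (hs : MeasurableSet s) (hsb : Bornology.IsBounded s) :
    ∀ᶠ t in 𝓝 (0 : ℝ), ∀ g : E → F,
      ∫ y in (fun x => x + t • W x) '' s, g y ∂μ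
        = ∫ x in s, (ContinuousLinearMap.id ℝ E + t • fderiv ℝ W x).det • g (x + t • W x) ∂μ := by
  obtain ⟨R, hsR⟩ := hsb.subset_closedBall 0
  have hK : IsCompact (Metric.closedBall (0 : E) R) := isCompact_closedBall 0 R
  obtain ⟨M, hM⟩ := hW.contDiffOn.exists_lipschitzOnWith one_ne_zero (convex_closedBall 0 R) hK
  have h_inj : ∀ᶠ t in 𝓝 (0 : ℝ), |t| * (M : ℝ) < 1 :=
    ((continuous_abs.mul continuous_const).tendsto' (0 : ℝ) 0 (by simp)).eventually
      (gt_mem_nhds one_pos)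
  have h_pos : ∀ᶠ t in 𝓝 (0 : ℝ), ∀ x ∈ Metric.closedBall (0 : E) R,
      0 < (ContinuousLinearMap.id ℝ E + t • fderiv ℝ W x).det := by
    refine hK.eventually_forall_of_forall_eventually fun x _ => ?_
    have hcont : Continuous fun p : ℝ × E =>
        (ContinuousLinearMap.id ℝ E + p.1 • fderiv ℝ W p.2).det :=
      ContinuousLinearMap.continuous_det.comp (continuous_const.add
        (continuous_fst.smul ((hW.continuous_fderiv one_ne_zero).comp continuous_snd)))
    exact hcont.continuousAt.eventually (lt_mem_nhds (by simp [ContinuousLinearMap.det]))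
  filter_upwards [h_inj, h_pos] with t ht_inj ht_pos g
  have hderiv : ∀ x ∈ s, HasFDerivWithinAt (fun x => x + t • W x)
      (ContinuousLinearMap.id ℝ E + t • fderiv ℝ W x) s x := fun x _ =>
    ((hasFDerivAt_id x).add
      ((hW.differentiable one_ne_zero x).hasFDerivAt.const_smul t)).hasFDerivWithinAt
  rw [integral_image_eq_integral_abs_det_fderiv_smul μ hs hderiv
    ((injOn_add_smul_of_lipschitzOnWith hM ht_inj).mono hsR)]
  refine setIntegral_congr_fun hs fun x hx => ?_
  rw [abs_of_pos (ht_pos x (hsR hx))]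

theorem hasDerivAt_setIntegral_of_continuous {X G : Type*} [MetricSpace X] [ProperSpace X]
    [MeasurableSpace X] [OpensMeasurableSpace X] [NormedAddCommGroup G] [NormedSpace ℝ G]
    {μ : Measure X} [IsFiniteMeasureOnCompacts μ] {s : Set X} (hs : Bornology.IsBounded s)
    {F F' : ℝ → X → G} (hF : Continuous (uncurry F)) (hF' : Continuous (uncurry F'))
    (h_deriv : ∀ t x, HasDerivAt (F · x) (F' t x) t) (t₀ : ℝ) :
    HasDerivAt (fun t => ∫ x in s, F t x ∂μ) (∫ x in s, F' t₀ x ∂μ) t₀ := by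
  have hK : IsCompact (closure s) := hs.isCompact_closure
  obtain ⟨C, hC⟩ := ((isCompact_closedBall t₀ 1).prod hK).exists_bound_of_continuousOn
    hF'.continuousOn
  refine (hasDerivAt_integral_of_dominated_loc_of_deriv_le (bound := fun _ => C)
    (Metric.closedBall_mem_nhds t₀ one_pos)
    (Eventually.of_forall fun t => (hF.uncurry_left t).aestronglyMeasurable)
    (((hF.uncurry_left t₀).continuousOn.integrableOn_compact hK).mono_set subset_closure)
    (hF'.uncurry_left t₀).aestronglyMeasurable ?_ (integrableOn_const hs.measure_lt_top.ne)
    (Eventually.of_forall fun x t _ => h_deriv t x)).2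
  refine ae_restrict_of_ae_restrict_of_subset subset_closure
    ((ae_restrict_mem isClosed_closure.measurableSet).mono fun x hx t ht => ?_)
  exact hC (t, x) ⟨ht, hx⟩

end General

local notation "ℝ²" => EuclideanSpace ℝ (Fin 2)

section Matrices

theorem frob_add_left (A B C : Matrix (Fin 2) (Fin 2) ℝ) :
    frob (A + B) C = frob A C + frob B C := by
  simp [frob, add_mul, Finset.sum_add_distrib]

theorem frob_add_right (A B C : Matrix (Fin 2) (Fin 2) ℝ) :
    frob A (B + C) = frob A B + frob A C := by
  simp [frob, mul_add, Finset.sum_add_distrib]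

@[fun_prop]
theorem Continuous.frob {X : Type*} [TopologicalSpace X] {A B : X → Matrix (Fin 2) (Fin 2) ℝ}
    (hA : Continuous A) (hB : Continuous B) : Continuous fun x => _root_.frob (A x) (B x) := by
  unfold _root_.frob
  fun_prop

theorem hasDerivAt_frob {A B : ℝ → Matrix (Fin 2) (Fin 2) ℝ} {A' B' : Matrix (Fin 2) (Fin 2) ℝ}
    {t : ℝ} (hA : ∀ i j, HasDerivAt (fun s => A s i j) (A' i j) t)
    (hB : ∀ i j, HasDerivAt (fun s => B s i j) (B' i j) t) :
    HasDerivAt (fun s => frob (A s) (B s)) (frob A' (B t) + frob (A t) B') t := by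
  simp only [frob, ← Finset.sum_add_distrib]
  exact HasDerivAt.fun_sum fun i _ => HasDerivAt.fun_sum fun j _ => (hA i j).mul (hB i j)

theorem apply_eq_sum_smul_single {F : Type*} [AddCommGroup F] [Module ℝ F] (L : ℝ² →ₗ[ℝ] F)
    (w : ℝ²) : L w = ∑ k, w k • L (EuclideanSpace.single k 1) := by
  conv_lhs => rw [← (EuclideanSpace.basisFun (Fin 2) ℝ).sum_repr w]
  simp

theorem continuous_jac {W : ℝ² → ℝ²} (hW : ContDiff ℝ 1 W) : Continuous (jac W) := by
  have := hW.continuous_fderiv one_ne_zero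
  unfold jac
  fun_prop

theorem jac_eq_toMatrix (W : ℝ² → ℝ²) (x : ℝ²) :
    jac W x = LinearMap.toMatrix (EuclideanSpace.basisFun (Fin 2) ℝ).toBasis
      (EuclideanSpace.basisFun (Fin 2) ℝ).toBasis (fderiv ℝ W x : ℝ² →ₗ[ℝ] ℝ²) := by
  ext i j
  simp [jac, LinearMap.toMatrix_apply]

theorem det_id_add_smul_fderiv (W : ℝ² → ℝ²) (t : ℝ) (x : ℝ²) :
    (ContinuousLinearMap.id ℝ ℝ² + t • fderiv ℝ W x).det
      = 1 + t * divg W x + t ^ 2 * (jac W x).det := by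
  set b := (EuclideanSpace.basisFun (Fin 2) ℝ).toBasis
  have h : LinearMap.toMatrix b b ((ContinuousLinearMap.id ℝ ℝ² + t • fderiv ℝ W x :
      ℝ² →L[ℝ] ℝ²) : ℝ² →ₗ[ℝ] ℝ²) = 1 + t • jac W x := by
    rw [jac_eq_toMatrix, ContinuousLinearMap.toLinearMap_add,
      ContinuousLinearMap.toLinearMap_smul, ContinuousLinearMap.coe_id, map_add, map_smul,
      LinearMap.toMatrix_id]
  rw [ContinuousLinearMap.det, ← LinearMap.det_toMatrix b, h, Matrix.det_fin_two, divg,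
    Matrix.trace_fin_two, Matrix.det_fin_two]
  simp only [Matrix.add_apply, Matrix.smul_apply, smul_eq_mul, Matrix.one_apply_eq,
    Matrix.one_apply_ne zero_ne_one, Matrix.one_apply_ne one_ne_zero, zero_add]
  ring

end Matrices

section SpaceTime

/-- `∇ₓu(p)`, the Jacobian of `u(p.1, ·)` at `p.2`. -/
noncomputable def spatialJac (u : ℝ × ℝ² → ℝ²) (p : ℝ × ℝ²) : Matrix (Fin 2) (Fin 2) ℝ :=
  Matrix.of fun i j => fderiv ℝ u p (0, EuclideanSpace.single j 1) i

noncomputable def spatialJacDeriv (u : ℝ × ℝ² → ℝ²) (p w : ℝ × ℝ²) :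
    Matrix (Fin 2) (Fin 2) ℝ :=
  Matrix.of fun i j => fderiv ℝ (fderiv ℝ u) p w (0, EuclideanSpace.single j 1) i

variable {u : ℝ × ℝ² → ℝ²}

theorem jac_slice {t : ℝ} {y : ℝ²} (hu : DifferentiableAt ℝ u (t, y)) :
    jac (fun z => u (t, z)) y = spatialJac u (t, y) := by
  have h : fderiv ℝ (fun z => u (t, z)) y = (fderiv ℝ u (t, y)).comp (.inr ℝ ℝ ℝ²) :=
    (hu.hasFDerivAt.comp y (hasFDerivAt_prodMk_right t y)).fderiv
  ext i j
  simp [jac, spatialJac, h]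

theorem continuous_spatialJac (hu : ContDiff ℝ 1 u) : Continuous (spatialJac u) := by
  have := hu.continuous_fderiv one_ne_zero
  unfold spatialJac
  fun_prop

theorem continuous_spatialJacDeriv (hu : ContDiff ℝ 2 u) :
    Continuous (uncurry (spatialJacDeriv u)) := by
  have := (hu.fderiv_right (m := 1) (by norm_num)).continuous_fderiv one_ne_zero
  unfold spatialJacDeriv
  fun_prop

theorem hasDerivAt_spatialJac (hu : ContDiff ℝ 2 u) {γ : ℝ → ℝ × ℝ²} {γ' : ℝ × ℝ²} {t : ℝ}
    (hγ : HasDerivAt γ γ' t) (i j : Fin 2) :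
    HasDerivAt (fun s => spatialJac u (γ s) i j) (spatialJacDeriv u (γ t) γ' i j) t := by
  have hD := ((hu.fderiv_right (m := 1) (by norm_num)).differentiable one_ne_zero
    (γ t)).hasFDerivAt.comp_hasDerivAt t hγ
  exact ((EuclideanSpace.proj i).comp (.apply ℝ ℝ² (0, EuclideanSpace.single j 1))
    ).hasFDerivAt.comp_hasDerivAt t hD

theorem deriv_comp_prod_add_smul {x : ℝ²} (hu : DifferentiableAt ℝ u (0, x)) (w : ℝ²) :
    deriv (fun t : ℝ => u (t, x + t • w)) 0 = fderiv ℝ u (0, x) (1, w) :=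
  (hu.hasFDerivAt.comp_hasDerivAt_of_eq 0 (hasDerivAt_prod_add_smul x w 0) (by simp)).deriv

theorem fderiv_apply_zero_prod (p : ℝ × ℝ²) (w : ℝ²) (i : Fin 2) :
    fderiv ℝ u p (0, w) i = ∑ k, spatialJac u p i k * w k := by
  have h := apply_eq_sum_smul_single ((fderiv ℝ u p).comp (.inr ℝ ℝ ℝ²) : ℝ² →ₗ[ℝ] ℝ²) w
  simp [spatialJac, mul_comm, show fderiv ℝ u p (0, w) = _ from h]

theorem jac_fderiv_apply_prod (hu : ContDiff ℝ 2 u) {W : ℝ² → ℝ²} (hW : ContDiff ℝ 1 W)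
    (x : ℝ²) :
    jac (fun z => fderiv ℝ u (0, z) (1, W z)) x
      = spatialJacDeriv u (0, x) (1, W x) + spatialJac u (0, x) * jac W x := by
  have hDu : HasFDerivAt (fun z : ℝ² => fderiv ℝ u (0, z))
      ((fderiv ℝ (fderiv ℝ u) (0, x)).comp (.inr ℝ ℝ ℝ²)) x :=
    ((hu.fderiv_right (m := 1) (by norm_num)).differentiable one_ne_zero _).hasFDerivAt.comp x
      (hasFDerivAt_prodMk_right 0 x)
  have hW' : HasFDerivAt (fun z : ℝ² => ((1 : ℝ), W z))
      ((0 : ℝ² →L[ℝ] ℝ).prod (fderiv ℝ W x)) x :=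
    (hasFDerivAt_const 1 x).prodMk (hW.differentiable one_ne_zero x).hasFDerivAt
  have hsymm := (hu.contDiffAt (x := (0, x))).isSymmSndFDerivAt (by simp)
  ext i j
  simp only [jac, spatialJacDeriv, (hDu.clm_apply hW').fderiv, hsymm.eq,
    add_apply, ContinuousLinearMap.comp_apply, ContinuousLinearMap.prod_apply, zero_apply,
    ContinuousLinearMap.flip_apply, ContinuousLinearMap.inr_apply, PiLp.add_apply,
    fderiv_apply_zero_prod, Matrix.of_apply, Matrix.add_apply, Matrix.mul_apply]
  ring

theorem hasDerivAt_setIntegral_viscous {v φ : ℝ × ℝ² → ℝ²} (hv : ContDiff ℝ 2 v)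
    (hφ : ContDiff ℝ 2 φ) {W : ℝ² → ℝ²} (hW : ContDiff ℝ 1 W) {s : Set ℝ²}
    (hs : Bornology.IsBounded s) (ν : ℝ) :
    HasDerivAt (fun t => ∫ x in s, (1 + t * divg W x + t ^ 2 * (jac W x).det) *
        (ν * frob (spatialJac v (t, x + t • W x)) (spatialJac φ (t, x + t • W x))))
      (∫ x in s, divg W x * (ν * frob (spatialJac v (0, x)) (spatialJac φ (0, x))) +
        ν * (frob (spatialJacDeriv v (0, x) (1, W x)) (spatialJac φ (0, x)) +
          frob (spatialJac v (0, x)) (spatialJacDeriv φ (0, x) (1, W x)))) 0 := by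
  have hJ := continuous_jac hW
  have hAv := continuous_spatialJac (hv.of_le (by norm_num))
  have hAφ := continuous_spatialJac (hφ.of_le (by norm_num))
  have hA'v := continuous_spatialJacDeriv hv
  have hA'φ := continuous_spatialJacDeriv hφ
  have hWc := hW.continuous
  have hpoly (a b t : ℝ) : HasDerivAt (fun s : ℝ => 1 + s * a + s ^ 2 * b) (a + 2 * t * b) t := by
    simpa using (((hasDerivAt_id t).mul_const a).const_add 1).fun_add
      ((hasDerivAt_pow 2 t).mul_const b)
  have h := hasDerivAt_setIntegral_of_continuous (μ := volume) hs
    (F := fun t x => (1 + t * divg W x + t ^ 2 * (jac W x).det) *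
        (ν * frob (spatialJac v (t, x + t • W x)) (spatialJac φ (t, x + t • W x))))
    (F' := fun t x => (divg W x + 2 * t * (jac W x).det) *
        (ν * frob (spatialJac v (t, x + t • W x)) (spatialJac φ (t, x + t • W x))) +
      (1 + t * divg W x + t ^ 2 * (jac W x).det) *
        (ν * (frob (spatialJacDeriv v (t, x + t • W x) (1, W x)) (spatialJac φ (t, x + t • W x)) +
          frob (spatialJac v (t, x + t • W x)) (spatialJacDeriv φ (t, x + t • W x) (1, W x)))))
    (by unfold divg; fun_prop) (by unfold divg; fun_prop) (fun t x => ?_) 0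
  · simpa using h
  have hγ := hasDerivAt_prod_add_smul x (W x) t
  exact (hpoly _ _ t).mul ((hasDerivAt_frob (hasDerivAt_spatialJac hv hγ)
    (hasDerivAt_spatialJac hφ hγ)).const_mul ν)

end SpaceTime

theorem shape_derivative_L2_general
    (W : EuclideanSpace ℝ (Fin 2) → EuclideanSpace ℝ (Fin 2))
    (hW : ContDiff ℝ 1 W)
    (Δ : Set (EuclideanSpace ℝ (Fin 2))) (hΔm : MeasurableSet Δ)
    (hΔb : Bornology.IsBounded Δ) (ν : ℝ)
    (v φ : ℝ × EuclideanSpace ℝ (Fin 2) → EuclideanSpace ℝ (Fin 2))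
    (hv : ContDiff ℝ 2 v) (hφ : ContDiff ℝ 2 φ)
    (v₀ vdot φ₀ φdot : EuclideanSpace ℝ (Fin 2) → EuclideanSpace ℝ (Fin 2))
    (hv₀ : v₀ = fun z => v ((0 : ℝ), z))
    (hvdot : vdot = fun z => deriv (fun t : ℝ => v (t, z + t • W z)) 0)
    (hφ₀ : φ₀ = fun z => φ ((0 : ℝ), z))
    (hφdot : φdot = fun z => deriv (fun t : ℝ => φ (t, z + t • W z)) 0) :
    HasDerivAt
      (fun t : ℝ => ∫ y in (fun x => x + t • W x) '' Δ,
        ν * frob (jac (fun z => v (t, z)) y) (jac (fun z => φ (t, z)) y))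
      (∫ x in Δ,
        (ν * frob (jac vdot x) (jac φ₀ x)
          - ν * frob (jac v₀ x * jac W x) (jac φ₀ x)
          + ν * frob (jac v₀ x) (jac φdot x)
          - ν * frob (jac v₀ x) (jac φ₀ x * jac W x)
          + divg W x * (ν * frob (jac v₀ x) (jac φ₀ x)))) (0 : ℝ) := by
  subst hv₀ hvdot hφ₀ hφdot
  have hv1 : Differentiable ℝ v := hv.differentiable (by norm_num)
  have hφ1 : Differentiable ℝ φ := hφ.differentiable (by norm_num)
  have h_cov : (fun t : ℝ => ∫ y in (fun x => x + t • W x) '' Δ,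
        ν * frob (jac (fun z => v (t, z)) y) (jac (fun z => φ (t, z)) y))
      =ᶠ[𝓝 0] fun t => ∫ x in Δ, (1 + t * divg W x + t ^ 2 * (jac W x).det) *
        (ν * frob (spatialJac v (t, x + t • W x)) (spatialJac φ (t, x + t • W x))) := by
    filter_upwards [eventually_setIntegral_image_add_smul (F := ℝ) volume hW hΔm hΔb] with t ht
    simp only [ht, det_id_add_smul_fderiv, jac_slice (hv1 _), jac_slice (hφ1 _), smul_eq_mul]
  refine ((hasDerivAt_setIntegral_viscous hv hφ hW hΔb ν).congr_of_eventuallyEq h_cov).congr_deriv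
    (setIntegral_congr_fun hΔm fun x _ => ?_)
  simp only [deriv_comp_prod_add_smul (hv1 _), deriv_comp_prod_add_smul (hφ1 _),
    jac_fderiv_apply_prod hv hW, jac_fderiv_apply_prod hφ hW, jac_slice (hv1 _),
    jac_slice (hφ1 _), frob_add_left, frob_add_right]
  ring

/-- Shape derivative of the mixed viscous term
`t ↦ ∫_{F_t(Δ)} ν ∇v(t,·) : ∇φ(t,·) dy`. -/
theorem shape_derivative_L2
    (W : EuclideanSpace ℝ (Fin 2) → EuclideanSpace ℝ (Fin 2))
    (hW : ContDiff ℝ 1 W) (hWc : HasCompactSupport W)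
    (Δ : Set (EuclideanSpace ℝ (Fin 2))) (hΔm : MeasurableSet Δ)
    (hΔb : Bornology.IsBounded Δ) (ν : ℝ)
    (v φ : ℝ × EuclideanSpace ℝ (Fin 2) → EuclideanSpace ℝ (Fin 2))
    (hv : ContDiff ℝ 2 v) (hφ : ContDiff ℝ 2 φ)
    (v₀ vdot φ₀ φdot : EuclideanSpace ℝ (Fin 2) → EuclideanSpace ℝ (Fin 2))
    (hv₀ : v₀ = fun z => v ((0 : ℝ), z))
    (hvdot : vdot = fun z => deriv (fun t : ℝ => v (t, z + t • W z)) 0)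
    (hφ₀ : φ₀ = fun z => φ ((0 : ℝ), z))
    (hφdot : φdot = fun z => deriv (fun t : ℝ => φ (t, z + t • W z)) 0) :
    HasDerivAt
      (fun t : ℝ => ∫ y in (fun x => x + t • W x) '' Δ,
        ν * frob (jac (fun z => v (t, z)) y) (jac (fun z => φ (t, z)) y))
      (∫ x in Δ,
        (ν * frob (jac vdot x) (jac φ₀ x)
          - ν * frob (jac v₀ x * jac W x) (jac φ₀ x)
          + ν * frob (jac v₀ x) (jac φdot x)
          - ν * frob (jac v₀ x) (jac φ₀ x * jac W x)
          + divg W x * (ν * frob (jac v₀ x) (jac φ₀ x)))) (0 : ℝ) :=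
  shape_derivative_L2_general W hW Δ hΔm hΔb ν v φ hv hφ v₀ vdot φ₀ φdot hv₀ hvdot hφ₀ hφdot
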